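/- Let R be an associative unital ring, (P_n, f_n)_{n∈ℤ} a complex of left R-modules, (A_n)_{n∈ℤ} a subcomplex such that the quotient module P_n/A_n is projective for every n, and X a left R-module. If both the complex (P_n, f_n) and the restricted complex on (A_n) are Hom_R(−,X)-exact, then the quotient complex (P_n/A_n), with the induced maps, is Hom_R(−,X)-exact. -/
import Mathlib


/-!
STATEMENT 12: if `(P n, f n)` is a complex, `(A n)` a subcomplex with each quotient
`P n ⧸ A n` projective, and both the complex and the restricted complex are
`Hom_R(-,X)`-exact, then the quotient complex is `Hom_R(-,X)`-exact.
-/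

universe u v w

variable {R : Type u} [Ring R]

/-- A complex `(N n, g n)_{n ∈ ℤ}` is `Hom_R(-,X)`-exact if for every `n` and every
linear `σ : N (n+1) →ₗ X` with `σ ∘ g n = 0` there is `τ : N (n+2) →ₗ X` with
`σ = τ ∘ g (n+1)`. -/
def IsHomExact {N : ℤ → Type v} [∀ n, AddCommGroup (N n)] [∀ n, Module R (N n)]
    (g : ∀ n, N n →ₗ[R] N (n + 1)) (X : Type w) [AddCommGroup X] [Module R X] : Prop :=
  ∀ n : ℤ, ∀ σ : N (n + 1) →ₗ[R] X, σ.comp (g n) = 0 →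
    ∃ τ : N (n + 1 + 1) →ₗ[R] X, σ = τ.comp (g (n + 1))

variable {M : ℤ → Type v} [∀ n, AddCommGroup (M n)] [∀ n, Module R (M n)]

/-- The `n`-th map of the restricted complex of a subcomplex `(A n)`. -/
def restrictedMap (f : ∀ n, M n →ₗ[R] M (n + 1)) (A : ∀ n, Submodule R (M n))
    (hA : ∀ n, A n ≤ (A (n + 1)).comap (f n)) (n : ℤ) : A n →ₗ[R] A (n + 1) :=
  (f n).restrict (fun x hx => hA n hx)

/-- The `n`-th map of the quotient complex `(M n ⧸ A n)`. -/
def quotientMap (f : ∀ n, M n →ₗ[R] M (n + 1)) (A : ∀ n, Submodule R (M n))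
    (hA : ∀ n, A n ≤ (A (n + 1)).comap (f n)) (n : ℤ) :
    (M n ⧸ A n) →ₗ[R] (M (n + 1) ⧸ A (n + 1)) :=
  Submodule.mapQ (A n) (A (n + 1)) (f n) (hA n)

lemma extend_of_projective {M : Type v} [AddCommGroup M] [Module R M]
    {A : Submodule R M} (h : Module.Projective R (M ⧸ A))
    {X : Type w} [AddCommGroup X] [Module R X] (α : A →ₗ[R] X) :
    ∃ e : M →ₗ[R] X, ∀ a : A, e a.1 = α a := by
  obtain ⟨s, hs⟩ := Module.projective_lifting_property A.mkQ LinearMap.id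
    (Submodule.mkQ_surjective A)
  have hmem : ∀ m : M, m - s (A.mkQ m) ∈ A := by
    intro m
    have h : A.mkQ (s (A.mkQ m)) = A.mkQ m := LinearMap.congr_fun hs (A.mkQ m)
    rw [← Submodule.Quotient.mk_eq_zero]
    show A.mkQ (m - s (A.mkQ m)) = 0
    rw [map_sub, h, sub_self]
  refine ⟨α.comp ((LinearMap.id - s.comp A.mkQ).codRestrict A hmem), fun a => ?_⟩
  have ha0 : A.mkQ a.1 = 0 := (Submodule.Quotient.mk_eq_zero _).2 a.2
  simp only [LinearMap.comp_apply, LinearMap.codRestrict_apply]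
  congr 1
  apply Subtype.ext
  simp [ha0]

theorem quotient_complex_homExact {f : ∀ n, M n →ₗ[R] M (n + 1)}
    (hcomplex : ∀ n, (f (n + 1)).comp (f n) = 0)
    {A : ∀ n, Submodule R (M n)} (hA : ∀ n, A n ≤ (A (n + 1)).comap (f n))
    (hproj : ∀ n, Module.Projective R (M n ⧸ A n))
    (X : Type w) [AddCommGroup X] [Module R X]
    (hfX : IsHomExact f X) (hAX : IsHomExact (restrictedMap f A hA) X) :
    IsHomExact (quotientMap f A hA) X := by
  intro n σ hσ
  set σ' : M (n + 1) →ₗ[R] X := σ.comp (A (n + 1)).mkQ with hσ'def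
  have hσ' : σ'.comp (f n) = 0 := by
    ext m
    have h1 : σ (quotientMap f A hA n (Submodule.Quotient.mk m)) = 0 := by
      rw [← LinearMap.comp_apply, hσ]; rfl
    simpa [σ', quotientMap, Submodule.mapQ_apply] using h1
  obtain ⟨τ₁, hτ₁⟩ := hfX n σ' hσ'
  set α : A (n + 1 + 1) →ₗ[R] X := τ₁.comp (A (n + 1 + 1)).subtype with hαdef
  have hα : α.comp (restrictedMap f A hA (n + 1)) = 0 := by
    ext a
    have h2 : τ₁ (f (n + 1) a.1) = σ' a.1 := by
      rw [hτ₁]; rfl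
    have h3 : σ' (a.1 : M (n + 1)) = 0 := by
      simp [σ', (Submodule.Quotient.mk_eq_zero _).2 a.2]
    simp [α, restrictedMap, LinearMap.restrict_apply, h2, h3]
  obtain ⟨β, hβ⟩ := hAX (n + 1) α hα
  obtain ⟨β', hβ'⟩ := extend_of_projective (A := A (n + 1 + 1 + 1))
    (hproj (n + 1 + 1 + 1)) β
  set τ₂ : M (n + 1 + 1) →ₗ[R] X := τ₁ - β'.comp (f (n + 1 + 1)) with hτ₂def
  have hvanish : A (n + 1 + 1) ≤ LinearMap.ker τ₂ := by
    intro a ha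
    have hfa : f (n + 1 + 1) a ∈ A (n + 1 + 1 + 1) := hA _ ha
    have h4 : α ⟨a, ha⟩ = β (restrictedMap f A hA (n + 1 + 1) ⟨a, ha⟩) := by
      rw [hβ]; rfl
    have h5 : β' (f (n + 1 + 1) a) = β ⟨f (n + 1 + 1) a, hfa⟩ := hβ' ⟨_, hfa⟩
    have h6 : restrictedMap f A hA (n + 1 + 1) ⟨a, ha⟩ = ⟨f (n + 1 + 1) a, hfa⟩ := rfl
    have h7 : α ⟨a, ha⟩ = τ₁ a := rfl
    simp only [τ₂, LinearMap.mem_ker, LinearMap.sub_apply, LinearMap.comp_apply]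
    rw [h5, ← h6, ← h4, h7, sub_self]
  refine ⟨Submodule.liftQ _ τ₂ hvanish, ?_⟩
  refine LinearMap.ext fun m => ?_
  obtain ⟨x, rfl⟩ := Submodule.Quotient.mk_surjective _ m
  have h8 : quotientMap f A hA (n + 1) (Submodule.Quotient.mk x) =
      Submodule.Quotient.mk (f (n + 1) x) := by
    simp [quotientMap, Submodule.mapQ_apply]
  rw [LinearMap.comp_apply, h8, Submodule.liftQ_apply]
  have h9 : σ (Submodule.Quotient.mk x) = σ' x := rfl
  have h10 : σ' x = τ₁ (f (n + 1) x) := by rw [hτ₁]; rfl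
  have h11 : f (n + 1 + 1) (f (n + 1) x) = 0 := LinearMap.congr_fun (hcomplex (n + 1)) x
  simp [τ₂, h9, h10, h11]
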